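/- Let A ⊂ L^∞ be a norm-closed convex acceptance set containing 0 (not necessarily a cone), S an eligible asset, and ρ(X_T) = inf{ m ∈ ℝ : X_T + (m/S_0)S_T ∈ A }, assumed finite. Then for every position X with X_0 > 0, R_{A,S}(X) ≤ (ρ(X_T))^+ / (X_0 + ρ(X_T)); in particular X_0 · R_{A,S}(X) ≤ ρ(X_T) whenever X_T ∉ A. -/

import Mathlib

open MeasureTheory

/-- The set of percentages making the combined position acceptable. -/
def IRset {Ω : Type*} [MeasurableSpace Ω] {μ : Measure Ω}
    (A : Set (Lp ℝ ⊤ μ)) (S0 X0 : ℝ) (ST XT : Lp ℝ ⊤ μ) : Set ℝ :=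
  {l : ℝ | l ∈ Set.Icc (0 : ℝ) 1 ∧ (1 - l) • XT + l • ((X0 / S0) • ST) ∈ A}

/-- The intrinsic risk measure. -/
noncomputable def IR {Ω : Type*} [MeasurableSpace Ω] {μ : Measure Ω}
    (A : Set (Lp ℝ ⊤ μ)) (S0 X0 : ℝ) (ST XT : Lp ℝ ⊤ μ) : ℝ :=
  sInf (IRset A S0 X0 ST XT)

/-- The traditional risk measure with eligible asset `S = (S0, ST)`. -/
noncomputable def rhoS {Ω : Type*} [MeasurableSpace Ω] {μ : Measure Ω}
    (A : Set (Lp ℝ ⊤ μ)) (S0 : ℝ) (ST XT : Lp ℝ ⊤ μ) : ℝ :=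
  sInf {m : ℝ | XT + (m / S0) • ST ∈ A}

theorem stmt18 {Ω : Type*} [MeasurableSpace Ω] (μ : Measure Ω) [IsProbabilityMeasure μ]
    (A : Set (Lp ℝ ⊤ μ)) (hne : A.Nonempty) (hproper : A ≠ Set.univ)
    (hmono : ∀ X ∈ A, ∀ Y : Lp ℝ ⊤ μ, X ≤ Y → Y ∈ A) (hclosed : IsClosed A)
    (hconv : Convex ℝ A) (h0 : (0 : Lp ℝ ⊤ μ) ∈ A)
    (S0 : ℝ) (hS0 : 0 < S0) (ST : Lp ℝ ⊤ μ) (hSA : ST ∈ A) (hST : 0 ≤ ST)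
    (hfin : ∀ Z : Lp ℝ ⊤ μ, {m : ℝ | Z + (m / S0) • ST ∈ A}.Nonempty ∧
      BddBelow {m : ℝ | Z + (m / S0) • ST ∈ A})
    (X0 : ℝ) (hX0 : 0 < X0) (XT : Lp ℝ ⊤ μ) :
    IR A S0 X0 ST XT ≤ max (rhoS A S0 ST XT) 0 / (X0 + rhoS A S0 ST XT) ∧
    (XT ∉ A → X0 * IR A S0 X0 ST XT ≤ rhoS A S0 ST XT) := by
  set r := rhoS A S0 ST XT with hr
  -- the set for rho is closed, nonempty, bddBelow, so r is a member
  have hcont : Continuous fun m : ℝ => XT + (m / S0) • ST := by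
    exact continuous_const.add ((continuous_id.div_const S0).smul continuous_const)
  have hMclosed : IsClosed {m : ℝ | XT + (m / S0) • ST ∈ A} :=
    hclosed.preimage hcont
  have hmem : XT + (r / S0) • ST ∈ A := by
    have := hMclosed.csInf_mem (hfin XT).1 (hfin XT).2
    exact this
  have hbddIR : BddBelow (IRset A S0 X0 ST XT) :=
    ⟨0, fun l hl => hl.1.1⟩
  rcases le_or_gt r 0 with hrle | hrpos
  · -- XT ∈ A
    have hXTA : XT ∈ A := by
      apply hmono _ hmem
      have hc : r / S0 ≤ 0 := div_nonpos_of_nonpos_of_nonneg hrle hS0.le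
      have hST' : (0 : Ω → ℝ) ≤ᵐ[μ] ST := (Lp.coeFn_nonneg ST).mpr hST
      rw [← Lp.coeFn_le]
      filter_upwards [Lp.coeFn_add XT ((r / S0) • ST), Lp.coeFn_smul (r / S0) ST, hST']
        with ω h1 h2 h3
      rw [h1, Pi.add_apply, h2, Pi.smul_apply, smul_eq_mul]
      nlinarith [mul_nonneg (neg_nonneg.mpr hc) h3]
    have h0mem : (0 : ℝ) ∈ IRset A S0 X0 ST XT := by
      refine ⟨⟨le_refl 0, zero_le_one⟩, ?_⟩
      simpa using hXTA
    have hIR0 : IR A S0 X0 ST XT ≤ 0 := csInf_le hbddIR h0mem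
    constructor
    · refine hIR0.trans ?_
      rw [max_eq_right hrle]
      simp
    · intro hXT; exact absurd hXTA hXT
  · -- r > 0
    have hsum : 0 < X0 + r := by linarith
    set l := r / (X0 + r) with hl
    have hl0 : 0 ≤ l := div_nonneg hrpos.le hsum.le
    have hl1 : l ≤ 1 := by
      rw [div_le_one hsum]; linarith
    have heq : (1 - l) • XT + l • ((X0 / S0) • ST)
        = (X0 / (X0 + r)) • (XT + (r / S0) • ST) := by
      rw [smul_add, smul_smul, smul_smul]
      have hne1 : X0 + r ≠ 0 := hsum.ne'
      congr 1
      · congr 1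
        rw [hl]; field_simp; ring
      · congr 1
        rw [hl]; field_simp
    have hlmem : l ∈ IRset A S0 X0 ST XT := by
      refine ⟨⟨hl0, hl1⟩, ?_⟩
      rw [heq]
      have := hconv hmem h0 (a := X0 / (X0 + r)) (b := r / (X0 + r))
        (div_nonneg hX0.le hsum.le) (div_nonneg hrpos.le hsum.le)
        (by field_simp)
      simpa using this
    have hIRle : IR A S0 X0 ST XT ≤ l := csInf_le hbddIR hlmem
    constructor
    · rw [max_eq_left hrpos.le]
      exact hIRle
    · intro _
      have h2 : X0 * IR A S0 X0 ST XT ≤ X0 * l :=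
        mul_le_mul_of_nonneg_left hIRle hX0.le
      refine h2.trans ?_
      rw [hl, mul_div_assoc', div_le_iff₀ hsum]
      nlinarith [sq_nonneg r]
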